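/- arXiv:1404.0753 — 6 statements merged into one kernel-verified Lean document; each statement's English description precedes it below -/
import Mathlib

section
/- If a graph G of maximum degree at most 3 on vertex set V has a bisection (a partition of V into two parts whose sizes differ by at most one) with at most k edges crossing, then G has a separation (L,S,R) — i.e., a partition of V with no edge between L and R — such that |S| ≤ k and |L|, |R| ≤ ⌈(|V|-|S|)/2⌉. -/
/-!
Deal with the crossing edges one at a time: for a crossing edge, move its endpoint on the currently
larger side into the separator. Every move removes at least one crossing edge and keeps the two
sides balanced, so after at most `k` moves no edge crosses, at most `k` vertices have been moved,
and each side has at most half (rounded up) of the remaining vertices.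
-/

open Finset

namespace SimpleGraph

variable {V : Type*} [DecidableEq V] (G : SimpleGraph V) [Fintype G.edgeSet]

def crossEdges (A B : Finset V) : Finset (Sym2 V) :=
  G.edgeFinset.filter fun e => ∃ a ∈ A, ∃ b ∈ B, e = s(a, b)

variable {G}

theorem mk_mem_crossEdges {A B : Finset V} {a b : V} (ha : a ∈ A) (hb : b ∈ B)
    (hab : G.Adj a b) :
    s(a, b) ∈ G.crossEdges A B :=
  mem_filter.2 ⟨G.mem_edgeFinset.2 hab, a, ha, b, hb, rfl⟩

theorem crossEdges_comm (A B : Finset V) : G.crossEdges A B = G.crossEdges B A := by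
  ext e
  simp only [crossEdges, mem_filter]
  constructor <;> rintro ⟨he, a, ha, b, hb, rfl⟩ <;> exact ⟨he, b, hb, a, ha, Sym2.eq_swap⟩

theorem not_adj_of_crossEdges_eq_empty {A B : Finset V} (h : G.crossEdges A B = ∅)
    {u v : V} (hu : u ∈ A) (hv : v ∈ B) : ¬ G.Adj u v := fun huv =>
  notMem_empty _ (h ▸ mk_mem_crossEdges hu hv huv)

theorem crossEdges_mono {A A' B B' : Finset V} (hA : A' ⊆ A) (hB : B' ⊆ B) :
    G.crossEdges A' B' ⊆ G.crossEdges A B := by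
  intro e
  simp only [crossEdges, mem_filter]
  rintro ⟨he, a, ha, b, hb, rfl⟩
  exact ⟨he, a, hA ha, b, hB hb, rfl⟩

theorem card_crossEdges_erase_lt {A B : Finset V} (hAB : Disjoint A B) {a b : V} (ha : a ∈ A)
    (hb : b ∈ B) (hab : G.Adj a b) :
    #(G.crossEdges (A.erase a) B) < #(G.crossEdges A B) := by
  refine card_lt_card <| (ssubset_iff_of_subset (crossEdges_mono (erase_subset a A) le_rfl)).2
    ⟨s(a, b), mk_mem_crossEdges ha hb hab, fun h => ?_⟩
  obtain ⟨-, x, hx, y, -, hxy⟩ := mem_filter.1 h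
  rcases Sym2.eq_iff.1 hxy with ⟨rfl, -⟩ | ⟨-, rfl⟩
  · exact notMem_erase _ _ hx
  · exact Finset.disjoint_left.1 hAB (mem_of_mem_erase hx) hb

theorem exists_separation_of_balanced {A B : Finset V} (hAB : Disjoint A B)
    (hA : #A ≤ #B + 1) (hB : #B ≤ #A + 1) :
    ∃ L ⊆ A, ∃ R ⊆ B, (∀ u ∈ L, ∀ v ∈ R, ¬ G.Adj u v) ∧ #L ≤ #R + 1 ∧ #R ≤ #L + 1 ∧
      #A + #B ≤ #L + #R + #(G.crossEdges A B) := by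
  induction hn : #(G.crossEdges A B) using Nat.strong_induction_on generalizing A B with
  | _ n ih =>
  wlog hBA : #B ≤ #A generalizing A B
  · obtain ⟨R, hR, L, hL, hsep, h⟩ :=
      this hAB.symm hB hA (by rwa [crossEdges_comm]) (by omega)
    exact ⟨L, hL, R, hR, fun u hu v hv huv => hsep v hv u hu huv.symm, by omega⟩
  obtain hempty | ⟨e, he⟩ := (G.crossEdges A B).eq_empty_or_nonempty
  · exact ⟨A, subset_rfl, B, subset_rfl,
      fun u hu v hv => not_adj_of_crossEdges_eq_empty hempty hu hv, hA, hB, by omega⟩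
  obtain ⟨hadj, a, ha, b, hb, rfl⟩ := mem_filter.1 he
  have hlt := card_crossEdges_erase_lt hAB ha hb (G.mem_edgeFinset.1 hadj)
  have hcard := card_erase_of_mem ha
  have hApos := card_pos.2 ⟨a, ha⟩
  obtain ⟨L, hL, R, hR, hsep, h⟩ := ih _ (hn ▸ hlt) (hAB.mono_left (erase_subset a A))
    (by omega) (by omega) rfl
  exact ⟨L, hL.trans (erase_subset a A), R, hR, hsep, by omega⟩

end SimpleGraph

open SimpleGraph in
theorem stmt_0_general {V : Type*} [Fintype V] [DecidableEq V] (G : SimpleGraph V) [DecidableRel G.Adj]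
    (A B : Finset V) (hpart : A ∪ B = Finset.univ) (hdisj : Disjoint A B)
    (hbal : (A.card : ℤ) - B.card ≤ 1 ∧ (B.card : ℤ) - A.card ≤ 1)
    (k : ℕ)
    (hcross : (G.edgeFinset.filter (fun e => ∃ a ∈ A, ∃ b ∈ B, e = s(a, b))).card ≤ k) :
    ∃ L S R : Finset V,
      L ∪ S ∪ R = Finset.univ ∧ Disjoint L S ∧ Disjoint L R ∧ Disjoint S R ∧
      (∀ u ∈ L, ∀ v ∈ R, ¬ G.Adj u v) ∧
      S.card ≤ k ∧
      L.card ≤ (Fintype.card V - S.card + 1) / 2 ∧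
      R.card ≤ (Fintype.card V - S.card + 1) / 2 := by
  obtain ⟨L, hL, R, hR, hsep, hLR, hRL, hcard⟩ :=
    exists_separation_of_balanced (G := G) hdisj (by omega) (by omega)
  have hLRdisj : Disjoint L R := hdisj.mono hL hR
  have hn : Fintype.card V = #A + #B := by
    rw [← card_univ, ← hpart, card_union_of_disjoint hdisj]
  set S := univ \ (L ∪ R)
  have hS : #S + (#L + #R) = Fintype.card V := by
    rw [← card_union_of_disjoint hLRdisj, card_sdiff_add_card_eq_card (subset_univ _), card_univ]
  refine ⟨L, S, R, ?_, ?_, hLRdisj, ?_, hsep, ?_, ?_, ?_⟩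
  · rw [union_right_comm]
    exact union_sdiff_of_subset (subset_univ _)
  · exact disjoint_sdiff.mono_left subset_union_left
  · exact disjoint_sdiff_self_left.mono_right subset_union_right
  all_goals
    have : #(G.crossEdges A B) ≤ k := hcross
    omega

theorem stmt_0 {V : Type*} [Fintype V] [DecidableEq V] (G : SimpleGraph V) [DecidableRel G.Adj]
    (hdeg : ∀ v, G.degree v ≤ 3)
    (A B : Finset V) (hpart : A ∪ B = Finset.univ) (hdisj : Disjoint A B)
    (hbal : (A.card : ℤ) - B.card ≤ 1 ∧ (B.card : ℤ) - A.card ≤ 1)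
    (k : ℕ)
    (hcross : (G.edgeFinset.filter (fun e => ∃ a ∈ A, ∃ b ∈ B, e = s(a, b))).card ≤ k) :
    ∃ L S R : Finset V,
      L ∪ S ∪ R = Finset.univ ∧ Disjoint L S ∧ Disjoint L R ∧ Disjoint S R ∧
      (∀ u ∈ L, ∀ v ∈ R, ¬ G.Adj u v) ∧
      S.card ≤ k ∧
      L.card ≤ (Fintype.card V - S.card + 1) / 2 ∧
      R.card ≤ (Fintype.card V - S.card + 1) / 2 :=
  stmt_0_general G A B hpart hdisj hbal k hcross
end

section
/- Let t : ℕ → ℝ≥0 be a nondecreasing function satisfying t(n) ≤ 2 · r^{n/6} · t(n/6) for all n ≥ n₀ and t(n) ≤ C for n < n₀, where r ≥ 2. Then t(n) ≤ C' · r^{(1/5)n + o(n)}; in particular the exponent constant c = 1/5 satisfies c = 1/6 + (1/6)c. -/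
/-!
Unrolling `t n ≤ a · r^(n/b) · t(n/b)` with `a ≤ r` costs a factor `r^(1 + n/b)` per level, and there
are about `log_b n` levels. Hence `t n ≤ C · r^(e n)` for any exponent with
`1 + n/b + e(n/b) ≤ e n`; the choice `e n = n/(b-1) + log_b n` works because `c = 1/(b-1)` is the
fixed point of `c = 1/b + c/b`, and the `log_b n` term pays for the factors `a ≤ r`.
For `b = 6` this gives `c = 1/5`.
-/

open Filter Asymptotics Real

noncomputable def recurrenceExponent (b n : ℕ) : ℝ :=
  n / (b - 1) + logb b n

lemma recurrenceExponent_nonneg {b : ℕ} (hb : 2 ≤ b) (n : ℕ) : 0 ≤ recurrenceExponent b n := by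
  have hb1 : (1 : ℝ) < b := by exact_mod_cast hb
  rcases n.eq_zero_or_pos with rfl | hn
  · simp [recurrenceExponent]
  · have : (1 : ℝ) ≤ n := by exact_mod_cast hn
    unfold recurrenceExponent
    have := logb_nonneg hb1 this
    have : (0 : ℝ) < b - 1 := by linarith
    positivity

lemma logb_natCast_div_add_one_le {b n : ℕ} (hb : 2 ≤ b) (hn : b ≤ n) :
    logb b ((n / b : ℕ) : ℝ) + 1 ≤ logb b n := by
  have hb1 : (1 : ℝ) < b := by exact_mod_cast hb
  have hq : (0 : ℝ) < (n / b : ℕ) := by exact_mod_cast Nat.div_pos hn (by omega)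
  calc logb b ((n / b : ℕ) : ℝ) + 1 = logb b ((n / b : ℕ) * b) := by
        rw [logb_mul hq.ne' (by positivity), logb_self_eq_one hb1]
    _ ≤ logb b n :=
        logb_le_logb_of_le hb1 (by positivity) (by exact_mod_cast Nat.div_mul_le_self n b)

lemma one_add_div_add_recurrenceExponent_div_le {b n : ℕ} (hb : 2 ≤ b) (hn : b ≤ n) :
    1 + (n : ℝ) / b + recurrenceExponent b (n / b) ≤ recurrenceExponent b n := by
  have hb1 : (0 : ℝ) < b - 1 := by
    have : (2 : ℝ) ≤ b := by exact_mod_cast hb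
    linarith
  have hdiv : ((n / b : ℕ) : ℝ) / (b - 1) ≤ (n : ℝ) / b / (b - 1) := by
    gcongr
    exact Nat.cast_div_le
  have hfix : (n : ℝ) / b + (n : ℝ) / b / (b - 1) = n / (b - 1) := by
    field_simp
    ring
  have hlog := logb_natCast_div_add_one_le hb hn
  unfold recurrenceExponent
  linarith

theorem le_mul_rpow_recurrenceExponent {t : ℕ → ℝ} {a r : ℝ} {b n₀ : ℕ} (hb : 2 ≤ b)
    (ha : 0 ≤ a) (har : a ≤ r) (hr : 1 ≤ r) (hmono : Monotone t)
    (hrec : ∀ n, n₀ ≤ n → t n ≤ a * r ^ ((n : ℝ) / b) * t (n / b)) (n : ℕ) :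
    t n ≤ max (t (max n₀ b)) 0 * r ^ recurrenceExponent b n := by
  set C := max (t (max n₀ b)) 0
  have hC : 0 ≤ C := le_max_right _ _
  induction n using Nat.strong_induction_on with
  | _ n ih =>
  by_cases hn : n ≤ max n₀ b
  · calc t n ≤ C := (hmono hn).trans (le_max_left _ _)
      _ ≤ C * r ^ recurrenceExponent b n :=
        le_mul_of_one_le_right hC (one_le_rpow hr (recurrenceExponent_nonneg hb n))
  · obtain ⟨hn₀, hbn⟩ : n₀ ≤ n ∧ b ≤ n := by omega
    have hr0 : 0 < r := by linarith
    calc t n ≤ a * r ^ ((n : ℝ) / b) * t (n / b) := hrec n hn₀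
      _ ≤ a * r ^ ((n : ℝ) / b) * (C * r ^ recurrenceExponent b (n / b)) := by
        gcongr
        exact ih _ (Nat.div_lt_self (by omega) (by omega))
      _ ≤ r ^ (1 : ℝ) * r ^ ((n : ℝ) / b) * (C * r ^ recurrenceExponent b (n / b)) := by
        rw [rpow_one]
        gcongr
      _ = C * r ^ (1 + n / b + recurrenceExponent b (n / b)) := by
        rw [rpow_add hr0, rpow_add hr0]
        ring
      _ ≤ C * r ^ recurrenceExponent b n := by
        gcongr
        exact one_add_div_add_recurrenceExponent_div_le hb hbn

theorem stmt_3_general (t : ℕ → ℝ) (r : ℝ) (n₀ : ℕ) (hr : 2 ≤ r)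
    (hmono : Monotone t)
    (hrec : ∀ n, n₀ ≤ n → t n ≤ 2 * r ^ ((n : ℝ) / 6) * t (n / 6)) :
    ((1 : ℝ) / 5 = 1 / 6 + (1 / 6) * (1 / 5)) ∧
    ∃ (C' : ℝ) (g : ℕ → ℝ),
      (g =o[atTop] fun n => (n : ℝ)) ∧
      ∀ n, t n ≤ C' * r ^ ((1 / 5) * (n : ℝ) + g n) := by
  refine ⟨by norm_num, max (t (max n₀ 6)) 0, fun n => logb 6 n,
    (isLittleO_logb_id_atTop (b := 6)).comp_tendsto tendsto_natCast_atTop_atTop, fun n => ?_⟩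
  have h := le_mul_rpow_recurrenceExponent (b := 6) (by norm_num) zero_le_two hr
    (one_le_two.trans hr) hmono (by exact_mod_cast hrec) n
  convert h using 3
  unfold recurrenceExponent
  norm_num
  ring

theorem stmt_3 (t : ℕ → ℝ) (r : ℝ) (n₀ : ℕ) (C : ℝ) (hr : 2 ≤ r)
    (ht0 : ∀ n, 0 ≤ t n) (hmono : Monotone t)
    (hrec : ∀ n, n₀ ≤ n → t n ≤ 2 * r ^ ((n : ℝ) / 6) * t (n / 6))
    (hbase : ∀ n, n < n₀ → t n ≤ C) :
    ((1 : ℝ) / 5 = 1 / 6 + (1 / 6) * (1 / 5)) ∧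
    ∃ (C' : ℝ) (g : ℕ → ℝ),
      (g =o[atTop] fun n => (n : ℝ)) ∧
      ∀ n, t n ≤ C' * r ^ ((1 / 5) * (n : ℝ) + g n) :=
  stmt_3_general t r n₀ hr hmono hrec
end

section
/- Let B > 0 and f(ρ, λ) = ρ + max(0, B − (ρ − λ)/2) with ρ ≥ λ ≥ 0. Suppose ρ − λ > 2B (imbalanced case), the reduction satisfies the balance condition ρ − ρ' ≥ λ − λ', and set d = (ρ + λ) − (ρ' + λ'). Then f(ρ, λ) − f(ρ', λ') ≥ d/2, both in the case where the resulting instance is imbalanced (ρ' − λ' > 2B, so f(ρ',λ') = ρ') and in the case where it is balanced (ρ' − λ' ≤ 2B, so f(ρ',λ') = (ρ'+λ')/2 + B). -/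
theorem stmt_8_general (B ρ lam ρ' lam' d : ℝ)
    (himbal : 2 * B < ρ - lam)
    (hcond : lam - lam' ≤ ρ - ρ')
    (hd : (ρ + lam) - (ρ' + lam') = d) :
    d / 2 ≤ (ρ + max 0 (B - (ρ - lam) / 2)) - (ρ' + max 0 (B - (ρ' - lam') / 2)) := by
  rw [max_eq_left (by linarith : B - (ρ - lam) / 2 ≤ 0)]
  obtain himbal' | hbal' := le_total (B - (ρ' - lam') / 2) 0
  · -- the claim is then exactly the balance condition `hcond`
    rw [max_eq_left himbal']
    linarith
  · -- the claim is then exactly the imbalance `himbal` of the input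
    rw [max_eq_right hbal']
    linarith

theorem stmt_8 (B ρ lam ρ' lam' d : ℝ) (hB : 0 < B)
    (h0 : 0 ≤ lam) (h1 : lam ≤ ρ)
    (himbal : 2 * B < ρ - lam)
    (h0' : 0 ≤ lam') (h1' : lam' ≤ ρ')
    (hcond : lam - lam' ≤ ρ - ρ')
    (hd : (ρ + lam) - (ρ' + lam') = d) :
    d / 2 ≤ (ρ + max 0 (B - (ρ - lam) / 2)) - (ρ' + max 0 (B - (ρ' - lam') / 2)) :=
  stmt_8_general B ρ lam ρ' lam' d himbal hcond hd
end

section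
/- Let μ_r(R), μ_s(S), μ_r(R'), μ_s(S') be nonnegative reals with μ_r(R) + μ_s(S) ≥ (1+ε)(μ_r(R') + μ_s(S')) for some ε > 0, and let B ≥ 0. Then 2 · 2^{μ_r(R') + μ_s(S') + B + (1+B)·log_{1+ε}(μ_r(R') + μ_s(S'))} ≤ 2^{μ_r(R) + μ_s(S) + (1+B)·log_{1+ε}(μ_r(R) + μ_s(S))}, provided μ_r(R') + μ_s(S') ≥ 1. -/
/-
Shrinking the measure by a factor `1 + ε` raises `log_{1+ε}` of it by one, so the logarithmic
term `(1 + B) * log_{1+ε}` grows by `1 + B`: this pays for the doubling (one more power of `2`)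
and for the new balance penalty `B`.
-/

open Real

lemma Real.one_add_logb_le_logb_of_mul_le {b x y : ℝ} (hb : 1 < b) (hx : 0 < x)
    (h : b * x ≤ y) : 1 + logb b x ≤ logb b y := by
  have := logb_le_logb_of_le hb (by positivity) h
  rwa [logb_mul (by positivity) hx.ne', logb_self_eq_one hb] at this

lemma Real.two_mul_two_rpow_le_two_rpow {a c : ℝ} (h : 1 + a ≤ c) :
    2 * (2 : ℝ) ^ a ≤ (2 : ℝ) ^ c :=
  calc 2 * (2 : ℝ) ^ a = (2 : ℝ) ^ (1 + a) := by rw [rpow_add two_pos, rpow_one]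
    _ ≤ (2 : ℝ) ^ c := rpow_le_rpow_of_exponent_le one_le_two h

theorem stmt_10_general (μR μS μR' μS' B ε : ℝ)
    (hB : 0 ≤ B) (hε : 0 < ε)
    (h1 : 1 ≤ μR' + μS')
    (hshrink : (1 + ε) * (μR' + μS') ≤ μR + μS) :
    2 * (2 : ℝ) ^ (μR' + μS' + B + (1 + B) * Real.logb (1 + ε) (μR' + μS'))
      ≤ (2 : ℝ) ^ (μR + μS + (1 + B) * Real.logb (1 + ε) (μR + μS)) := by
  have hpos : 0 < μR' + μS' := by linarith
  have hmono : μR' + μS' ≤ μR + μS := by linarith [mul_pos hε hpos]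
  have hlog := one_add_logb_le_logb_of_mul_le (by linarith) hpos hshrink
  apply two_mul_two_rpow_le_two_rpow
  linarith [mul_le_mul_of_nonneg_left hlog (by linarith : (0 : ℝ) ≤ 1 + B)]

theorem stmt_10 (μR μS μR' μS' B ε : ℝ)
    (hR : 0 ≤ μR) (hS : 0 ≤ μS) (hR' : 0 ≤ μR') (hS' : 0 ≤ μS')
    (hB : 0 ≤ B) (hε : 0 < ε)
    (h1 : 1 ≤ μR' + μS')
    (hshrink : (1 + ε) * (μR' + μS') ≤ μR + μS) :
    2 * (2 : ℝ) ^ (μR' + μS' + B + (1 + B) * Real.logb (1 + ε) (μR' + μS'))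
      ≤ (2 : ℝ) ^ (μR + μS + (1 + B) * Real.logb (1 + ε) (μR + μS)) :=
  stmt_10_general μR μS μR' μS' B ε hB hε h1 hshrink
end

section
/- Let G_3(n) (n divisible by 4, n ≥ 4) be the graph on vertices a₁,…,a_n obtained from the cycle on the 3n/4 vertices {a_j : 4 ∤ j} (in their cyclic order a₁,a₂,a₃,a₅,a₆,a₇,…,a_{n−3},a_{n−2},a_{n−1}) by adding, for each 1 ≤ i ≤ n/4, the vertex a_{4i} adjacent to a_{4i−3}, a_{4i−2}, a_{4i−1}. Then G_3(n) is connected, 3-regular, and for n > 4, deleting a_n and then repeatedly suppressing degree-2 vertices (contracting one of their incident edges) and deleting degree-≤1 vertices yields a graph isomorphic to G_3(n−4). -/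
/-- The graph `G₃(4k)` on vertices `Fin k × Fin 4`: block `i` consists of the three
cycle vertices `(i,0), (i,1), (i,2)` (consecutive on the cycle, with `(i,2)` joined to
`(i+1,0)` of the next block) together with the hub vertex `(i,3)` adjacent to the other
three vertices of its block. Block `i` corresponds to `a_{4i+1}, a_{4i+2}, a_{4i+3}, a_{4i+4}`,
so the hub of the last block is `a_n`. -/
def G3 (k : ℕ) : SimpleGraph (Fin k × Fin 4) :=
  SimpleGraph.fromRel (fun x y =>
    (x.1 = y.1 ∧ ((x.2.val = 0 ∧ y.2.val = 1) ∨ (x.2.val = 1 ∧ y.2.val = 2) ∨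
      (x.2.val = 0 ∧ y.2.val = 3) ∨ (x.2.val = 1 ∧ y.2.val = 3) ∨
      (x.2.val = 2 ∧ y.2.val = 3)))
    ∨ ((y.1.val = (x.1.val + 1) % k) ∧ x.2.val = 2 ∧ y.2.val = 0))

/-- Delete the vertex `v` from `G` (keeping `v` around as an isolated vertex). -/
def isolate {V : Type*} (G : SimpleGraph V) (v : V) : SimpleGraph V :=
  SimpleGraph.fromRel (fun a b => G.Adj a b ∧ a ≠ v ∧ b ≠ v)

/-- Suppress the vertex `v` (making it isolated) and add the edge `u w`. -/
def isolateAdd {V : Type*} (G : SimpleGraph V) (v u w : V) : SimpleGraph V :=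
  SimpleGraph.fromRel (fun a b => (G.Adj a b ∧ a ≠ v ∧ b ≠ v) ∨ (a = u ∧ b = w))

/-- One reduction step: suppress a degree-2 vertex (delete it, joining its two
neighbors by an edge), or delete a vertex of degree at most 1. -/
inductive ReduceStep {V : Type*} : SimpleGraph V → SimpleGraph V → Prop
  | suppress (G : SimpleGraph V) (v u w : V) (h : G.neighborSet v = {u, w}) (huw : u ≠ w) :
      ReduceStep G (isolateAdd G v u w)
  | deleteLow (G : SimpleGraph V) (v : V) (h : (G.neighborSet v).Subsingleton) :
      ReduceStep G (isolate G v)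

/-!
Inside a block the vertices `0, 1, 2, 3` span `K₄` minus the edge `02`, and the cycle adds the
edges `(i, 2) (i + 1, 0)`; so every vertex has degree three, and the hubs `(i, 3)` are joined in a
ring through their blocks, which makes the graph connected. After deleting the last hub `a_n`,
suppressing `a_{n-2}`, then `a_{n-3}`, then `a_{n-1}` removes the last block and leaves the single
new edge `a_{n-5} a_1`, which closes the cycle of `G₃(n - 4)` on the remaining blocks.
-/

namespace SimpleGraph

variable {V : Type*} (G : SimpleGraph V)

lemma isolate_adj (v a b : V) :
    (isolate G v).Adj a b ↔ G.Adj a b ∧ a ≠ v ∧ b ≠ v := by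
  simp only [isolate, fromRel_adj]
  constructor
  · rintro ⟨-, h | ⟨h, hb, ha⟩⟩
    exacts [h, ⟨h.symm, ha, hb⟩]
  · exact fun h => ⟨h.1.ne, Or.inl h⟩

lemma isolateAdd_adj (v u w a b : V) :
    (isolateAdd G v u w).Adj a b ↔
      (G.Adj a b ∧ a ≠ v ∧ b ≠ v) ∨ (a ≠ b ∧ s(a, b) = s(u, w)) := by
  simp only [isolateAdd, fromRel_adj, Sym2.eq_iff]
  grind [Adj.symm, Adj.ne]

end SimpleGraph

open SimpleGraph

lemma Nat.add_one_mod_of_lt {i k : ℕ} (h : i < k) :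
    (i + 1) % k = if i + 1 = k then 0 else i + 1 := by
  split_ifs with hk
  · rw [hk, Nat.mod_self]
  · exact Nat.mod_eq_of_lt (by omega)

-- `x.2 + y.2 ≠ 2` excludes exactly the non-edge `{0, 2}` of a block; `x.1 + 1 = k` is the
-- wrap-around of the cycle.
lemma G3_adj_iff {k : ℕ} (x y : Fin k × Fin 4) :
    (G3 k).Adj x y ↔
      (x.1.val = y.1.val ∧ x.2.val ≠ y.2.val ∧ x.2.val + y.2.val ≠ 2) ∨
      (x.2.val = 2 ∧ y.2.val = 0 ∧
        (y.1.val = x.1.val + 1 ∨ x.1.val + 1 = k ∧ y.1.val = 0)) ∨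
      (y.2.val = 2 ∧ x.2.val = 0 ∧
        (x.1.val = y.1.val + 1 ∨ y.1.val + 1 = k ∧ x.1.val = 0)) := by
  obtain ⟨⟨i, hi⟩, s⟩ := x
  obtain ⟨⟨j, hj⟩, t⟩ := y
  fin_cases s <;> fin_cases t <;>
    simp [G3, fromRel_adj, Prod.ext_iff, Nat.add_one_mod_of_lt hi, Nat.add_one_mod_of_lt hj] <;>
    (try split_ifs) <;> omega

lemma Fin.exists_cyclic_succ {k : ℕ} (i : Fin k) :
    ∃ j : Fin k, j.val = i.val + 1 ∨ (i.val + 1 = k ∧ j.val = 0) :=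
  if h : i.val + 1 < k then ⟨⟨i.val + 1, h⟩, Or.inl rfl⟩
  else ⟨⟨0, i.pos⟩, Or.inr ⟨by omega, rfl⟩⟩

lemma Fin.exists_cyclic_pred {k : ℕ} (i : Fin k) :
    ∃ j : Fin k, i.val = j.val + 1 ∨ (j.val + 1 = k ∧ i.val = 0) :=
  if h : i.val = 0 then ⟨⟨k - 1, by omega⟩, Or.inr ⟨Nat.sub_add_cancel i.pos, h⟩⟩
  else ⟨⟨i.val - 1, by omega⟩, Or.inl (Nat.succ_pred_eq_of_ne_zero h).symm⟩

theorem G3_ncard_neighborSet {k : ℕ} (v : Fin k × Fin 4) :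
    ((G3 k).neighborSet v).ncard = 3 := by
  obtain ⟨i, s⟩ := v
  obtain ⟨p, hp⟩ := i.exists_cyclic_pred
  obtain ⟨q, hq⟩ := i.exists_cyclic_succ
  rw [Set.ncard_eq_three]
  fin_cases s
  on_goal 1 => refine ⟨(i, 1), (i, 3), (p, 2), ?_⟩
  on_goal 2 => refine ⟨(i, 0), (i, 2), (i, 3), ?_⟩
  on_goal 3 => refine ⟨(i, 1), (i, 3), (q, 0), ?_⟩
  on_goal 4 => refine ⟨(i, 0), (i, 1), (i, 2), ?_⟩
  all_goals
    refine ⟨by simp, by simp, by simp, Set.ext fun ⟨j, t⟩ => ?_⟩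
    simp [G3_adj_iff, Prod.ext_iff, Fin.ext_iff, -Fin.val_eq_zero_iff]
    omega

theorem G3_connected {k : ℕ} (hk : 1 ≤ k) : (G3 k).Connected := by
  have toHub (i : Fin k) (s : Fin 4) : (G3 k).Reachable (i, s) (i, 3) := by
    by_cases hs : s = 3
    · rw [hs]
    · refine Adj.reachable ?_
      simp [G3_adj_iff, Fin.ext_iff, -Fin.val_eq_zero_iff] at hs ⊢
      omega
  have hubToNext (i : ℕ) (hi : i + 1 < k) :
      (G3 k).Reachable (⟨i, by omega⟩, 3) (⟨i + 1, hi⟩, 3) :=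
    (toHub _ 2).symm.trans <| (Adj.reachable (by simp [G3_adj_iff])).trans (toHub _ 0)
  have fromFirstHub (i : ℕ) (hi : i < k) : (G3 k).Reachable (⟨0, hk⟩, 3) (⟨i, hi⟩, 3) := by
    induction i with
    | zero => rfl
    | succ i ih => exact (ih (by omega)).trans (hubToNext i hi)
  exact (connected_iff_exists_forall_reachable _).mpr
    ⟨(⟨0, hk⟩, 3), fun v => (fromFirstHub _ v.1.isLt).trans (toHub _ _).symm⟩

section Reduction

-- With `k = m + 2`, the vertex `(Fin.last (m + 1), s)` is `a_{n-3+s}`,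
-- `((Fin.last m).castSucc, 2)` is `a_{n-5}` and `(0, 0)` is `a_1`.
variable (m : ℕ)

def G3Reduced₀ : SimpleGraph (Fin (m + 2) × Fin 4) :=
  isolate (G3 (m + 2)) (Fin.last (m + 1), 3)

def G3Reduced₁ : SimpleGraph (Fin (m + 2) × Fin 4) :=
  isolateAdd (G3Reduced₀ m) (Fin.last (m + 1), 1) (Fin.last (m + 1), 0) (Fin.last (m + 1), 2)

def G3Reduced₂ : SimpleGraph (Fin (m + 2) × Fin 4) :=
  isolateAdd (G3Reduced₁ m) (Fin.last (m + 1), 0) ((Fin.last m).castSucc, 2)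
    (Fin.last (m + 1), 2)

def G3Reduced₃ : SimpleGraph (Fin (m + 2) × Fin 4) :=
  isolateAdd (G3Reduced₂ m) (Fin.last (m + 1), 2) ((Fin.last m).castSucc, 2) (0, 0)

lemma G3Reduced₀_neighborSet :
    (G3Reduced₀ m).neighborSet (Fin.last (m + 1), 1) =
      {(Fin.last (m + 1), 0), (Fin.last (m + 1), 2)} := by
  ext ⟨j, t⟩
  simp [G3Reduced₀, isolate_adj, G3_adj_iff, Prod.ext_iff, Fin.ext_iff, -Fin.val_eq_zero_iff]
  omega

lemma G3Reduced₁_neighborSet :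
    (G3Reduced₁ m).neighborSet (Fin.last (m + 1), 0) =
      {((Fin.last m).castSucc, 2), (Fin.last (m + 1), 2)} := by
  ext ⟨j, t⟩
  simp [G3Reduced₁, G3Reduced₀, isolateAdd_adj, isolate_adj, G3_adj_iff, Prod.ext_iff,
    Fin.ext_iff, -Fin.val_eq_zero_iff]
  omega

lemma G3Reduced₂_neighborSet :
    (G3Reduced₂ m).neighborSet (Fin.last (m + 1), 2) =
      {((Fin.last m).castSucc, 2), (0, 0)} := by
  ext ⟨j, t⟩
  simp [G3Reduced₂, G3Reduced₁, G3Reduced₀, isolateAdd_adj, isolate_adj, G3_adj_iff,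
    Prod.ext_iff, Fin.ext_iff, -Fin.val_eq_zero_iff]
  omega

lemma G3Reduced₀_reducesTo_G3Reduced₃ :
    Relation.ReflTransGen ReduceStep (G3Reduced₀ m) (G3Reduced₃ m) := by
  have h₁ := ReduceStep.suppress _ _ _ _ (G3Reduced₀_neighborSet m) (by simp)
  have h₂ := ReduceStep.suppress _ _ _ _ (G3Reduced₁_neighborSet m)
    (by simp [Prod.ext_iff, Fin.ext_iff])
  have h₃ := ReduceStep.suppress _ _ _ _ (G3Reduced₂_neighborSet m) (by simp)
  exact ((Relation.ReflTransGen.single h₁).tail h₂).tail h₃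

lemma G3Reduced₃_adj_iff (a b : Fin (m + 2) × Fin 4) :
    (G3Reduced₃ m).Adj a b ↔
      ((G3 (m + 2)).Adj a b ∧ a.1 ≠ Fin.last (m + 1) ∧ b.1 ≠ Fin.last (m + 1)) ∨
        s(a, b) = s(((Fin.last m).castSucc, 2), (0, 0)) := by
  obtain ⟨i, s⟩ := a
  obtain ⟨j, t⟩ := b
  fin_cases s <;> fin_cases t <;>
    simp [G3Reduced₃, G3Reduced₂, G3Reduced₁, G3Reduced₀, isolateAdd_adj, isolate_adj, G3_adj_iff,
      Prod.ext_iff, Fin.ext_iff, -Fin.val_eq_zero_iff] <;>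
    omega

def G3Reduced₃.castSuccEmbedding : G3 (m + 1) ↪g G3Reduced₃ m where
  toEmbedding := Fin.castSuccEmb.prodMap (Function.Embedding.refl _)
  map_rel_iff' {a b} := by
    obtain ⟨i, s⟩ := a
    obtain ⟨j, t⟩ := b
    fin_cases s <;> fin_cases t <;>
      simp [G3Reduced₃_adj_iff, G3_adj_iff, Prod.ext_iff, Fin.ext_iff, -Fin.val_eq_zero_iff] <;>
      omega

lemma G3Reduced₃_mem_support (x : Fin (m + 2) × Fin 4) :
    x ∈ (G3Reduced₃ m).support ↔ x.1 ≠ Fin.last (m + 1) := by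
  -- inside a block, `s` is adjacent to `s + 1` (mod 4)
  refine ⟨fun ⟨y, hy⟩ => ?_, fun hx => ⟨(x.1, x.2 + 1), ?_⟩⟩
  · rcases (G3Reduced₃_adj_iff m x y).mp hy with ⟨-, hx, -⟩ | hxy
    · exact hx
    · simp [Prod.ext_iff, Fin.ext_iff, -Fin.val_eq_zero_iff] at hxy ⊢
      omega
  · refine (G3Reduced₃_adj_iff m _ _).mpr (Or.inl ⟨?_, hx, hx⟩)
    obtain ⟨i, s⟩ := x
    fin_cases s <;> simp [G3_adj_iff]

lemma G3Reduced₃_support :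
    (G3Reduced₃ m).support = Set.range (G3Reduced₃.castSuccEmbedding m) := by
  ext ⟨i, s⟩
  simp [G3Reduced₃_mem_support, G3Reduced₃.castSuccEmbedding, Fin.ext_iff]
  omega

end Reduction

theorem stmt_12 (k : ℕ) (hk : 1 ≤ k) :
    (G3 k).Connected ∧
    (∀ v, ((G3 k).neighborSet v).ncard = 3) ∧
    (2 ≤ k →
      ∃ H : SimpleGraph (Fin k × Fin 4),
        Relation.ReflTransGen ReduceStep
          (isolate (G3 k) (⟨k - 1, by omega⟩, (3 : Fin 4))) H ∧
        Nonempty ((SimpleGraph.induce H.support H) ≃g G3 (k - 1))) := by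
  refine ⟨G3_connected hk, G3_ncard_neighborSet, fun hk₂ => ?_⟩
  obtain ⟨m, rfl⟩ : ∃ m, k = m + 2 := ⟨k - 2, by omega⟩
  refine ⟨G3Reduced₃ m, G3Reduced₀_reducesTo_G3Reduced₃ m, ?_⟩
  rw [G3Reduced₃_support]
  exact ⟨(G3Reduced₃.castSuccEmbedding m).isoInduceRange.symm⟩
end

section
/- If a function f : ℕ → ℝ≥0 satisfies f(I) ≤ p(η) · r^{μ'} whenever the algorithm delegates to a subroutine, and otherwise f(I) ≤ q(η(I)) + Σᵢ f(Iᵢ) with η(Iᵢ) ≤ η(I) − 1 and Σᵢ r^{μ(Iᵢ)} ≤ r^{μ(I)}, where μ'(I) ≤ μ(I) for all I, p(η) = O(η^{c+1}), q(η) = O(η^c), then f(I) = O(η(I)^{c+1}) · r^{μ(I)}. -/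
/-!
Induct on `η`. A delegated instance is within the bound because `μ' ≤ μ` and `r > 1`. At a
branching instance the induction hypothesis bounds every child `J` by `K η^{c+1} r^{μ J}`; the
measure condition sums these to `K η^{c+1} r^{μ I}`, and the local cost `K (η + 1)^c` is absorbed
since `(η + 1)^c + η^{c+1} ≤ (η + 1)^{c+1}` and `r^{μ I} ≥ 1`.
-/

theorem rpow_add_rpow_add_one_le {x y c : ℝ} (hc : 0 ≤ c) (hx : 0 ≤ x) (hxy : x + 1 ≤ y) :
    y ^ c + x ^ (c + 1) ≤ y ^ (c + 1) := by
  have hy : 0 ≤ y := by linarith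
  have hxc : x ^ c ≤ y ^ c := Real.rpow_le_rpow hx (by linarith) hc
  calc y ^ c + x ^ (c + 1) = y ^ c + x ^ c * x := by
        rw [Real.rpow_add' hx (by positivity), Real.rpow_one]
    _ ≤ y ^ c + y ^ c * x := by gcongr
    _ = y ^ c * (x + 1) := by ring
    _ ≤ y ^ c * y := by gcongr
    _ = y ^ (c + 1) := by rw [Real.rpow_add' hy (by positivity), Real.rpow_one]

theorem le_mul_weight_of_branching {α : Type*} (T w : α → ℝ) (η : α → ℕ)
    (children : α → List α) (delegated : α → Prop) (F q : ℕ → ℝ)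
    (hw : ∀ I, 1 ≤ w I) (hq : ∀ n, 0 ≤ q n) (hqF : ∀ n, q n ≤ F n)
    (hFq : ∀ m n, m < n → q n + F m ≤ F n)
    (hdeleg : ∀ I, delegated I → T I ≤ F (η I) * w I)
    (hrec : ∀ I, ¬ delegated I → T I ≤ q (η I) + ((children I).map T).sum)
    (hη : ∀ I, ¬ delegated I → ∀ J ∈ children I, η J < η I)
    (hsum : ∀ I, ¬ delegated I → ((children I).map w).sum ≤ w I) (I : α) :
    T I ≤ F (η I) * w I := by
  induction hn : η I using Nat.strong_induction_on generalizing I with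
  | _ n ih =>
    by_cases hd : delegated I
    · exact hn ▸ hdeleg I hd
    have hchild : ∀ J ∈ children I, T J ≤ (F n - q n) * w J := fun J hJ => by
      have hJn : η J < n := hn ▸ hη I hd J hJ
      refine (ih _ hJn J rfl).trans (mul_le_mul_of_nonneg_right ?_ (zero_le_one.trans (hw J)))
      linarith [hFq _ _ hJn]
    have hchildren : ((children I).map T).sum ≤ (F n - q n) * w I :=
      calc ((children I).map T).sum ≤ ((children I).map fun J => (F n - q n) * w J).sum :=
            List.sum_le_sum hchild
        _ = (F n - q n) * ((children I).map w).sum := List.sum_map_mul_left _ _ _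
        _ ≤ (F n - q n) * w I := mul_le_mul_of_nonneg_left (hsum I hd) (by linarith [hqF n])
    calc T I ≤ q n + ((children I).map T).sum := hn ▸ hrec I hd
      _ ≤ q n * w I + (F n - q n) * w I := by
          gcongr
          exact le_mul_of_one_le_right (hq n) (hw I)
      _ = F n * w I := by ring

theorem stmt_19_general {α : Type*} (T μ μ' : α → ℝ) (η : α → ℕ) (children : α → List α)
    (delegated : α → Prop) (c r K : ℝ) (hc : 0 ≤ c) (hr : 1 < r) (hK : 0 ≤ K)
    (hμ : ∀ I, 0 ≤ μ I) (hμ' : ∀ I, μ' I ≤ μ I)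
    (hdeleg : ∀ I, delegated I → T I ≤ K * ((η I : ℝ) + 1) ^ (c + 1) * r ^ μ' I)
    (hrec : ∀ I, ¬ delegated I → T I ≤ K * ((η I : ℝ) + 1) ^ c + ((children I).map T).sum)
    (hη : ∀ I, ¬ delegated I → ∀ J ∈ children I, η J + 1 ≤ η I)
    (hsum : ∀ I, ¬ delegated I → ((children I).map (fun J => r ^ μ J)).sum ≤ r ^ μ I) :
    ∃ K' : ℝ, ∀ I, T I ≤ K' * ((η I : ℝ) + 1) ^ (c + 1) * r ^ μ I := by
  refine ⟨K, le_mul_weight_of_branching T (fun I => r ^ μ I) η children delegated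
    (fun n => K * ((n : ℝ) + 1) ^ (c + 1)) (fun n => K * ((n : ℝ) + 1) ^ c)
    (fun I => Real.one_le_rpow hr.le (hμ I)) (fun n => by positivity) (fun n => ?_)
    (fun m n hmn => ?_) (fun I hd => ?_) hrec hη hsum⟩
  · exact mul_le_mul_of_nonneg_left
      (Real.rpow_le_rpow_of_exponent_le (by simp) (by linarith)) hK
  · rw [← mul_add]
    refine mul_le_mul_of_nonneg_left (rpow_add_rpow_add_one_le hc (by positivity) ?_) hK
    have : (m : ℝ) + 1 ≤ n := by exact_mod_cast hmn
    linarith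
  · exact (hdeleg I hd).trans <| mul_le_mul_of_nonneg_left
      (Real.rpow_le_rpow_of_exponent_le hr.le (hμ' I)) (by positivity)

theorem stmt_19 {α : Type*} (T μ μ' : α → ℝ) (η : α → ℕ) (children : α → List α)
    (delegated : α → Prop) (c r K : ℝ) (hc : 0 ≤ c) (hr : 1 < r) (hK : 0 ≤ K)
    (hT : ∀ I, 0 ≤ T I) (hμ : ∀ I, 0 ≤ μ I) (hμ' : ∀ I, μ' I ≤ μ I)
    (hdeleg : ∀ I, delegated I → T I ≤ K * ((η I : ℝ) + 1) ^ (c + 1) * r ^ μ' I)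
    (hrec : ∀ I, ¬ delegated I → T I ≤ K * ((η I : ℝ) + 1) ^ c + ((children I).map T).sum)
    (hη : ∀ I, ¬ delegated I → ∀ J ∈ children I, η J + 1 ≤ η I)
    (hsum : ∀ I, ¬ delegated I → ((children I).map (fun J => r ^ μ J)).sum ≤ r ^ μ I) :
    ∃ K' : ℝ, ∀ I, T I ≤ K' * ((η I : ℝ) + 1) ^ (c + 1) * r ^ μ I :=
  stmt_19_general T μ μ' η children delegated c r K hc hr hK hμ hμ' hdeleg hrec hη hsum
end
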